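/- Let ρ be a representation of a finite-dimensional Lie algebra g and define the bilinear form C_ρ on A(g) by C_ρ(X,Y) = -½(B_ρ(x₁,y₁) + B_ρ(x₂,y₂) + B_ρ(x₃,y₃)), where B_ρ(x,y) = tr(ρ(x)ρ(y)). Then C_ρ is invariant on the Nahm algebra: C_ρ(X·Y, Z) = C_ρ(X, Y·Z) for all X, Y, Z ∈ A(g). -/

import Mathlib

attribute [local instance 100] LieRing.ofAssociativeRing

def nahmMul (𝕜 : Type*) [RCLike 𝕜] {L : Type*} [LieRing L] [LieAlgebra 𝕜 L]
    (X Y : Fin 3 → L) : Fin 3 → L :=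
  fun i => (2 : 𝕜)⁻¹ • (⁅X (i + 1), Y (i + 2)⁆ + ⁅Y (i + 1), X (i + 2)⁆)

/-- The trace form `B_ρ(x, y) = tr (ρ x ∘ ρ y)` of a representation `ρ`. -/
noncomputable def traceFormB (𝕜 : Type*) [RCLike 𝕜] {L V : Type*} [LieRing L] [LieAlgebra 𝕜 L]
    [AddCommGroup V] [Module 𝕜 V] (ρ : L →ₗ⁅𝕜⁆ Module.End 𝕜 V) (x y : L) : 𝕜 :=
  LinearMap.trace 𝕜 V (ρ x ∘ₗ ρ y)

/-- The induced trace form `C_ρ(X, Y) = -½ ∑ᵢ B_ρ(xᵢ, yᵢ)` on the Nahm algebra. -/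
noncomputable def nahmFormC (𝕜 : Type*) [RCLike 𝕜] {L V : Type*} [LieRing L] [LieAlgebra 𝕜 L]
    [AddCommGroup V] [Module 𝕜 V] (ρ : L →ₗ⁅𝕜⁆ Module.End 𝕜 V) (X Y : Fin 3 → L) : 𝕜 :=
  -(2 : 𝕜)⁻¹ * ∑ i : Fin 3, traceFormB 𝕜 ρ (X i) (Y i)

/-!
For a symmetric invariant form `Φ`, the trilinear form `Φ ⁅x, y⁆ z` is invariant under cyclic
permutations of its arguments. Expanding both sides of the invariance identity, the terms of
`Φ (X·Y) Z` and of `Φ X (Y·Z)` therefore agree after cyclically reindexing `Fin 3`. The trace form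
of `ρ` is the trace form of `V` viewed as an `L`-module through `ρ`, which is symmetric and invariant.
-/

namespace LinearMap.BilinForm

variable {𝕜 L : Type*} [RCLike 𝕜] [LieRing L] [LieAlgebra 𝕜 L] {Φ : LinearMap.BilinForm 𝕜 L}

lemma apply_lie_eq_lie_apply (hΦ : Φ.lieInvariant L) (x y z : L) :
    Φ x ⁅y, z⁆ = Φ ⁅x, y⁆ z := by
  rw [← lie_skew x y, map_neg, LinearMap.neg_apply, hΦ, neg_neg]

lemma lie_apply_cycle (hsymm : Φ.IsSymm) (hΦ : Φ.lieInvariant L) (x y z : L) :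
    Φ ⁅x, y⁆ z = Φ ⁅y, z⁆ x := by
  rw [← apply_lie_eq_lie_apply hΦ, hsymm.eq]

theorem sum_nahmMul_apply_eq_sum_apply_nahmMul (hsymm : Φ.IsSymm) (hΦ : Φ.lieInvariant L)
    (X Y Z : Fin 3 → L) :
    ∑ i, Φ (nahmMul 𝕜 X Y i) (Z i) = ∑ i, Φ (X i) (nahmMul 𝕜 Y Z i) := by
  set f : Fin 3 → 𝕜 := fun i ↦ Φ ⁅X i, Y (i + 1)⁆ (Z (i + 2))
  set g : Fin 3 → 𝕜 := fun i ↦ Φ ⁅X i, Z (i + 1)⁆ (Y (i + 2))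
  have hleft (i : Fin 3) : Φ (nahmMul 𝕜 X Y i) (Z i) = 2⁻¹ * (f (i + 1) + g (i + 2)) := by
    obtain ⟨h₁, h₂, h₃, h₄⟩ :
        i + 1 + 1 = i + 2 ∧ i + 1 + 2 = i ∧ i + 2 + 1 = i ∧ i + 2 + 2 = i + 1 := by
      grind
    simp only [nahmMul, map_smul, map_add, LinearMap.smul_apply, LinearMap.add_apply, f, g,
      smul_eq_mul, h₁, h₂, h₃, h₄, lie_apply_cycle hsymm hΦ (Y (i + 1))]
  have hright (i : Fin 3) : Φ (X i) (nahmMul 𝕜 Y Z i) = 2⁻¹ * (f i + g i) := by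
    simp only [nahmMul, map_smul, map_add, smul_eq_mul, f, g, apply_lie_eq_lie_apply hΦ]
  have hshift (h : Fin 3 → 𝕜) (k : Fin 3) : ∑ i, h (i + k) = ∑ i, h i :=
    Equiv.sum_comp (Equiv.addRight k) h
  simp only [hleft, hright, ← Finset.mul_sum, Finset.sum_add_distrib, hshift]

end LinearMap.BilinForm

theorem nahm_form_invariant (𝕜 : Type*) [RCLike 𝕜] (L : Type*) [LieRing L] [LieAlgebra 𝕜 L]
    (V : Type*) [AddCommGroup V] [Module 𝕜 V] [FiniteDimensional 𝕜 V]
    (ρ : L →ₗ⁅𝕜⁆ Module.End 𝕜 V) (X Y Z : Fin 3 → L) :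
    nahmFormC 𝕜 ρ (nahmMul 𝕜 X Y) Z = nahmFormC 𝕜 ρ X (nahmMul 𝕜 Y Z) := by
  let := LieRingModule.compLieHom V ρ
  have := LieModule.compLieHom V ρ
  exact congrArg _ <| (LieModule.traceForm 𝕜 L V).sum_nahmMul_apply_eq_sum_apply_nahmMul
    (LinearMap.BilinForm.isSymm_iff.mpr (LieModule.traceForm_isSymm 𝕜 L V))
    (LieModule.traceForm_lieInvariant 𝕜 L V) X Y Z
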